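/- Let X and Y be metric spaces, 0 < ε/2 < ω < δ < ε, and let f : X → Y be a basepoint-preserving σ-isometry for a constant σ with 0 ≤ σ < min{ε − δ, (δ − ω)/4}. Then for any δ-chain α in X, the induced δ-to-ε class satisfies |f_#([α]_δ)| ≤ |[α]_δ| + σ(4|[α]_δ|/ε + 1), where |[γ]| denotes the infimum of lengths of chains in the homotopy class. -/

import Mathlib

noncomputable section
open Metric

variable {X : Type*} [MetricSpace X]

def IsEpsChain (ε : ℝ) (l : List X) : Prop :=
  l ≠ [] ∧ l.Chain' (fun a b => dist a b < ε)

def chainLength : List X → ℝ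
  | a :: b :: t => dist a b + chainLength (b :: t)
  | _ => 0

def conc (α β : List X) : List X := α ++ β.tail

def Insertion (α β : List X) : Prop :=
  ∃ (p s : List X) (x : X), p ≠ [] ∧ s ≠ [] ∧ α = p ++ s ∧ β = p ++ x :: s

def Move (ε : ℝ) (α β : List X) : Prop :=
  IsEpsChain ε α ∧ IsEpsChain ε β ∧ (Insertion α β ∨ Insertion β α)

def EpsHomotopic (ε : ℝ) : List X → List X → Prop :=
  Relation.ReflTransGen (Move ε)

def IsEpsNull (ε : ℝ) (l : List X) : Prop := ∃ x, EpsHomotopic ε l [x]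

def IsGeodesicSpace (Y : Type*) [MetricSpace Y] : Prop :=
  ∀ x y : Y, ∃ γ : ℝ → Y, γ 0 = x ∧ γ (dist x y) = y ∧
    ∀ s ∈ Set.Icc (0:ℝ) (dist x y), ∀ t ∈ Set.Icc (0:ℝ) (dist x y),
      dist (γ s) (γ t) = |s - t|

def ChainConnected (Y : Type*) [MetricSpace Y] : Prop :=
  ∀ ε > (0:ℝ), ∀ x y : Y, ∃ l : List Y, IsEpsChain ε l ∧ l.head? = some x ∧ l.getLast? = some y

theorem epsHomotopic_equiv (ε : ℝ) : Equivalence (EpsHomotopic (X := X) ε) := by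
  refine ⟨fun _ => Relation.ReflTransGen.refl, ?_, fun h h' => h.trans h'⟩
  intro a b h
  induction h with
  | refl => exact Relation.ReflTransGen.refl
  | tail _ hxy ih => exact Relation.ReflTransGen.head ⟨hxy.2.1, hxy.1, hxy.2.2.symm⟩ ih

/-- `|[α]_ε| = inf { L(γ) : γ ε-homotopic to α }`. -/
def classNorm (ε : ℝ) (α : List X) : ℝ :=
  sInf {r | ∃ γ : List X, EpsHomotopic ε α γ ∧ r = chainLength γ}

/-
A chain `γ` that is `δ`-homotopic to `α` can be shortened, without increasing its length, by
deleting the middle point `b` of any triple `a, b, c` with `dist a c < δ` (a legal `δ`-move).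
In the resulting reduced chain, points two steps apart are at distance at least `δ`, so a chain
of length `L` has at most `2L/δ + 2` points. Its image under `f` is `ε`-homotopic to `f(α)`, and
each of its steps is stretched by at most `σ`, so it has length at most
`L + σ(2L/δ + 1) ≤ L + σ(4L/ε + 1)` because `ε < 2δ`. Taking the infimum over `γ` gives the bound.
-/

lemma chainLength_nonneg : ∀ l : List X, 0 ≤ chainLength l
  | [] | [_] => le_rfl
  | _ :: b :: t => add_nonneg dist_nonneg (chainLength_nonneg (b :: t))

lemma EpsHomotopic.isEpsChain {δ : ℝ} {α β : List X} (h : EpsHomotopic δ α β)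
    (hα : IsEpsChain δ α) : IsEpsChain δ β := by
  induction h with
  | refl => exact hα
  | tail _ hmove _ => exact hmove.2.1

lemma classNorm_le_chainLength {ε : ℝ} {α γ : List X} (h : EpsHomotopic ε α γ) :
    classNorm ε α ≤ chainLength γ :=
  csInf_le ⟨0, by rintro r ⟨γ, -, rfl⟩; exact chainLength_nonneg γ⟩ ⟨γ, h, rfl⟩

lemma le_map_classNorm {δ c : ℝ} {g : ℝ → ℝ} (hg : Monotone g) (hgc : Continuous g)
    {α : List X} (h : ∀ γ, EpsHomotopic δ α γ → c ≤ g (chainLength γ)) :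
    c ≤ g (classNorm δ α) := by
  set S := {r | ∃ γ : List X, EpsHomotopic δ α γ ∧ r = chainLength γ}
  have hS : S.Nonempty := ⟨_, α, Relation.ReflTransGen.refl, rfl⟩
  have hbdd : BddBelow S := ⟨0, by rintro r ⟨γ, -, rfl⟩; exact chainLength_nonneg γ⟩
  rw [classNorm, hg.map_csInf_of_continuousAt hgc.continuousAt hS hbdd]
  refine le_csInf (hS.image g) ?_
  rintro _ ⟨_, ⟨γ, hγ, rfl⟩, rfl⟩
  exact h γ hγ

lemma Insertion.map {Z W : Type*} (f : Z → W) {l l' : List Z} (h : Insertion l l') :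
    Insertion (l.map f) (l'.map f) := by
  obtain ⟨p, s, x, hp, hs, rfl, rfl⟩ := h
  exact ⟨p.map f, s.map f, f x, by simpa using hp, by simpa using hs, by simp, by simp⟩

section Map

variable {Y : Type*} [MetricSpace Y] {f : X → Y} {σ : ℝ}

lemma IsEpsChain.map {δ ε : ℝ} (hf : ∀ x y, dist (f x) (f y) ≤ dist x y + σ)
    (hδσ : δ + σ < ε) {l : List X} (h : IsEpsChain δ l) : IsEpsChain ε (l.map f) := by
  refine ⟨by simpa using h.1, ?_⟩
  rw [List.Chain', List.isChain_map]
  exact (show List.IsChain _ l from h.2).imp fun a b hab => by linarith [hf a b]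

lemma EpsHomotopic.map {δ ε : ℝ} (hf : ∀ x y, dist (f x) (f y) ≤ dist x y + σ)
    (hδσ : δ + σ < ε) {α β : List X} (h : EpsHomotopic δ α β) :
    EpsHomotopic ε (α.map f) (β.map f) :=
  Relation.ReflTransGen.lift (List.map f) (fun _ _ hab =>
    ⟨hab.1.map hf hδσ, hab.2.1.map hf hδσ, hab.2.2.imp (Insertion.map f) (Insertion.map f)⟩) _ _ h

lemma chainLength_map_le (hf : ∀ x y, dist (f x) (f y) ≤ dist x y + σ) :
    ∀ l : List X, l ≠ [] → chainLength (l.map f) ≤ chainLength l + σ * (l.length - 1)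
  | [_], _ => by simp [chainLength]
  | a :: b :: t, _ => by
      have ih := chainLength_map_le hf (b :: t) (List.cons_ne_nil _ _)
      simp only [List.map_cons, chainLength, List.length_cons, Nat.cast_add, Nat.cast_one] at ih ⊢
      linarith [hf a b]

end Map

section Reduction

variable {δ : ℝ}

/-- Reduced: no interior point can be removed by a `δ`-move. -/
def IsReducedChain (δ : ℝ) : List X → Prop
  | a :: b :: c :: t => δ ≤ dist a c ∧ IsReducedChain δ (b :: c :: t)
  | _ => True

lemma IsReducedChain.tail : ∀ {x : X} {l : List X}, IsReducedChain δ (x :: l) → IsReducedChain δ l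
  | _, [], _ | _, [_], _ => trivial
  | _, _ :: _ :: _, h => h.2

lemma IsReducedChain.mul_length_le (hδ : 0 ≤ δ) :
    ∀ {l : List X}, IsReducedChain δ l → δ * (l.length - 2) ≤ 2 * chainLength l
  | [], _ | [_], _ => by simp [chainLength]; linarith
  | [a, b], _ => by simp [chainLength]
  | a :: b :: c :: t, ⟨hac, hrest⟩ => by
      have ih := hrest.tail.mul_length_le hδ
      simp only [chainLength, List.length_cons, Nat.cast_add, Nat.cast_one] at ih ⊢
      linarith [dist_triangle a b c]

lemma exists_of_not_isReducedChain : ∀ {l : List X}, ¬ IsReducedChain δ l →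
    ∃ (p : List X) (a b c : X) (s : List X), l = p ++ a :: b :: c :: s ∧ dist a c < δ
  | [], h | [_], h | [_, _], h => absurd trivial h
  | a :: b :: c :: t, h => by
      by_cases hac : δ ≤ dist a c
      · obtain ⟨p, x, y, z, s, heq, hd⟩ :=
          exists_of_not_isReducedChain fun hr => h ⟨hac, hr⟩
        exact ⟨a :: p, x, y, z, s, by rw [heq]; rfl, hd⟩
      · exact ⟨[], a, b, c, t, rfl, not_le.mp hac⟩

lemma IsEpsChain.delete {p s : List X} {a b c : X} (h : IsEpsChain δ (p ++ a :: b :: c :: s))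
    (hac : dist a c < δ) : IsEpsChain δ (p ++ a :: c :: s) := by
  refine ⟨by simp, ?_⟩
  have h2 := h.2
  rw [List.Chain', List.isChain_append] at h2 ⊢
  obtain ⟨hp, hrest, hjoin⟩ := h2
  simp only [List.isChain_cons_cons] at hrest ⊢
  exact ⟨hp, ⟨hac, hrest.2.2⟩, by simpa using hjoin⟩

lemma chainLength_delete_le (b : X) :
    ∀ (p : List X) (a c : X) (s : List X),
      chainLength (p ++ a :: c :: s) ≤ chainLength (p ++ a :: b :: c :: s)
  | [], a, c, s => by
      simp only [List.nil_append, chainLength]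
      linarith [dist_triangle a b c]
  | [x], a, c, s => by
      simpa [chainLength] using chainLength_delete_le b [] a c s
  | x :: y :: p, a, c, s => by
      simpa [chainLength] using chainLength_delete_le b (y :: p) a c s

theorem IsEpsChain.exists_isReducedChain (l : List X) (hl : IsEpsChain δ l) :
    ∃ l', EpsHomotopic δ l l' ∧ chainLength l' ≤ chainLength l ∧ IsReducedChain δ l' := by
  by_cases hred : IsReducedChain δ l
  · exact ⟨l, Relation.ReflTransGen.refl, le_rfl, hred⟩
  obtain ⟨p, a, b, c, s, rfl, hac⟩ := exists_of_not_isReducedChain hred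
  have hmove : Move δ (p ++ a :: b :: c :: s) (p ++ a :: c :: s) :=
    ⟨hl, hl.delete hac, Or.inr ⟨p ++ [a], c :: s, b, by simp, by simp, by simp, by simp⟩⟩
  obtain ⟨l', hhom, hlen, hred'⟩ := IsEpsChain.exists_isReducedChain _ hmove.2.1
  exact ⟨l', Relation.ReflTransGen.head hmove hhom,
    hlen.trans (chainLength_delete_le b p a c s), hred'⟩
termination_by l.length
decreasing_by subst_vars; simp

lemma IsReducedChain.chainLength_map_le {Y : Type*} [MetricSpace Y] {f : X → Y} {σ : ℝ}
    (hf : ∀ x y, dist (f x) (f y) ≤ dist x y + σ) (hδ : 0 < δ) (hσ : 0 ≤ σ) {l : List X}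
    (hl : IsReducedChain δ l) (hne : l ≠ []) :
    chainLength (l.map f) ≤ chainLength l + σ * (2 * chainLength l / δ + 1) := by
  have hcount : (l.length : ℝ) - 2 ≤ 2 * chainLength l / δ := by
    rw [le_div_iff₀ hδ]
    linarith [hl.mul_length_le hδ.le]
  have hcount' : (l.length : ℝ) - 1 ≤ 2 * chainLength l / δ + 1 := by linarith
  linarith [_root_.chainLength_map_le hf l hne, mul_le_mul_of_nonneg_left hcount' hσ]

end Reduction

theorem statement8_general {Y : Type*} [MetricSpace Y] (ε ω δ σ : ℝ)
    (h2 : ε / 2 < ω) (h3 : ω < δ)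
    (hσ0 : 0 ≤ σ) (hσ : σ < min (ε - δ) ((δ - ω) / 4))
    (f : X → Y)
    (hdist : ∀ x y : X, |dist x y - dist (f x) (f y)| ≤ σ)
    (α : List X) (hα : IsEpsChain δ α) :
    classNorm ε (α.map f) ≤ classNorm δ α + σ * (4 * classNorm δ α / ε + 1) := by
  have hδσ : δ + σ < ε := by linarith [min_le_left (ε - δ) ((δ - ω) / 4)]
  have hδ : 0 < δ := by linarith
  have hε : 0 < ε := by linarith
  have hf : ∀ x y, dist (f x) (f y) ≤ dist x y + σ := fun x y => by
    linarith [(abs_le.mp (hdist x y)).1]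
  have hg : Monotone fun r => r + σ * (4 * r / ε + 1) := fun r s hrs => by
    dsimp only
    gcongr
  refine le_map_classNorm hg (by fun_prop) fun γ hγ => ?_
  obtain ⟨γ', hγγ', hlen, hred⟩ := (hγ.isEpsChain hα).exists_isReducedChain
  have hαγ' : EpsHomotopic δ α γ' := hγ.trans hγγ'
  have hL := chainLength_nonneg γ'
  have hdiv : 2 * chainLength γ' / δ ≤ 4 * chainLength γ' / ε := by
    rw [div_le_div_iff₀ hδ hε]
    nlinarith
  calc classNorm ε (α.map f) ≤ chainLength (γ'.map f) :=
        classNorm_le_chainLength (hαγ'.map hf hδσ)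
    _ ≤ chainLength γ' + σ * (2 * chainLength γ' / δ + 1) :=
        hred.chainLength_map_le hf hδ hσ0 (hαγ'.isEpsChain hα).1
    _ ≤ chainLength γ' + σ * (4 * chainLength γ' / ε + 1) := by gcongr
    _ ≤ chainLength γ + σ * (4 * chainLength γ / ε + 1) := hg hlen

/-- Length bound for the induced map `f_#` of a constant σ-isometry:
`|f_#([α]_δ)| ≤ |[α]_δ| + σ(4|[α]_δ|/ε + 1)`. -/
theorem statement8 {Y : Type*} [MetricSpace Y] (ε ω δ σ : ℝ) (x0 : X) (y0 : Y)
    (h1 : 0 < ε) (h2 : ε / 2 < ω) (h3 : ω < δ) (h4 : δ < ε)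
    (hσ0 : 0 ≤ σ) (hσ : σ < min (ε - δ) ((δ - ω) / 4))
    (f : X → Y) (hbase : f x0 = y0)
    (hdist : ∀ x y : X, |dist x y - dist (f x) (f y)| ≤ σ)
    (hnet : ∀ z : Y, ∃ w : X, dist z (f w) ≤ σ)
    (α : List X) (hα : IsEpsChain δ α) :
    classNorm ε (α.map f) ≤ classNorm δ α + σ * (4 * classNorm δ α / ε + 1) :=
  statement8_general ε ω δ σ h2 h3 hσ0 hσ f hdist α hα
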